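/- Let O₁, …, O_k be pairwise disjoint finite sets and P a finite set. Define P' by successively replacing P ∩ O_i with O_i \ P (symmetric difference with O_i) whenever |(symmDiff P O_i) ∩ A_i| > |P ∩ A_i|, for fixed sets A_i ⊆ O_i. Then the resulting set P' satisfies |A_i \ P'| ≤ |A_i ∩ P'| for every i, and P' \ (⋃_i O_i) = P \ (⋃_i O_i). -/
import Mathlib


open scoped Classical

/-- The deformation construction in the proof of Lemma 2: deforming `P` along
the pairwise disjoint loops `O i` (symmetric difference) whenever this
increases the number of edges of `A i` on the path yields a set `P'` with at
least half of each `A i` on it, agreeing with `P` outside the loops. -/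
theorem path_deformation {α ι : Type*} [DecidableEq α] [DecidableEq ι]
    (I : Finset ι) (O A : ι → Finset α) (P : Finset α)
    (hdisj : (I : Set ι).Pairwise (fun i j => Disjoint (O i) (O j)))
    (hA : ∀ i ∈ I, A i ⊆ O i) :
    ∀ P' : Finset α,
      P' = (P \ ((I.filter (fun i =>
              (P ∩ A i).card < ((((P \ O i) ∪ (O i \ P))) ∩ A i).card)).biUnion O))
            ∪ (((I.filter (fun i =>
              (P ∩ A i).card < ((((P \ O i) ∪ (O i \ P))) ∩ A i).card)).biUnion O) \ P) →
      (∀ i ∈ I, (A i \ P').card ≤ (A i ∩ P').card) ∧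
      P' \ I.biUnion O = P \ I.biUnion O := by
  intro P' hP'
  set S := I.filter (fun i =>
      (P ∩ A i).card < ((((P \ O i) ∪ (O i \ P))) ∩ A i).card) with hSdef
  set U := S.biUnion O with hUdef
  have hkey : ∀ i ∈ I, ∀ a ∈ O i, (a ∈ U ↔ i ∈ S) := by
    intro i hi a ha
    constructor
    · intro haU
      rw [hUdef, Finset.mem_biUnion] at haU
      obtain ⟨j, hj, haj⟩ := haU
      by_cases h : j = i
      · rwa [h] at hj
      · have hjI : j ∈ I := (Finset.mem_filter.mp hj).1
        exact absurd ha (Finset.disjoint_left.mp (hdisj hjI hi h) haj)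
    · intro hiS
      exact Finset.mem_biUnion.mpr ⟨i, hiS, ha⟩
  have hmem : ∀ a, a ∈ P' ↔ ((a ∈ P ∧ a ∉ U) ∨ (a ∈ U ∧ a ∉ P)) := by
    intro a
    rw [hP']
    simp only [Finset.mem_union, Finset.mem_sdiff]
  have heq : ∀ i ∈ I, (((P \ O i) ∪ (O i \ P)) ∩ A i) = A i \ P := by
    intro i hi
    ext a
    simp only [Finset.mem_inter, Finset.mem_union, Finset.mem_sdiff]
    constructor
    · rintro ⟨h, haA⟩
      rcases h with ⟨_, hno⟩ | ⟨_, hnp⟩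
      · exact absurd (hA i hi haA) hno
      · exact ⟨haA, hnp⟩
    · rintro ⟨haA, hnp⟩
      exact ⟨Or.inr ⟨hA i hi haA, hnp⟩, haA⟩
  constructor
  · intro i hi
    by_cases hiS : i ∈ S
    · have h1 : A i \ P' = A i ∩ P := by
        ext a
        simp only [Finset.mem_sdiff, Finset.mem_inter, hmem]
        constructor
        · rintro ⟨haA, h⟩
          have haU : a ∈ U := (hkey i hi a (hA i hi haA)).mpr hiS
          push_neg at h
          exact ⟨haA, by tauto⟩
        · rintro ⟨haA, haP⟩
          have haU : a ∈ U := (hkey i hi a (hA i hi haA)).mpr hiS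
          exact ⟨haA, by tauto⟩
      have h2 : A i ∩ P' = A i \ P := by
        ext a
        simp only [Finset.mem_sdiff, Finset.mem_inter, hmem]
        constructor
        · rintro ⟨haA, h⟩
          have haU : a ∈ U := (hkey i hi a (hA i hi haA)).mpr hiS
          exact ⟨haA, by tauto⟩
        · rintro ⟨haA, haP⟩
          have haU : a ∈ U := (hkey i hi a (hA i hi haA)).mpr hiS
          exact ⟨haA, Or.inr ⟨haU, haP⟩⟩
      rw [h1, h2]
      have hcond := (Finset.mem_filter.mp hiS).2
      rw [heq i hi] at hcond
      calc (A i ∩ P).card = (P ∩ A i).card := by rw [Finset.inter_comm]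
        _ ≤ (A i \ P).card := le_of_lt hcond
    · have h1 : A i \ P' = A i \ P := by
        ext a
        simp only [Finset.mem_sdiff, hmem]
        constructor
        · rintro ⟨haA, h⟩
          have haU : a ∉ U := fun hu => hiS ((hkey i hi a (hA i hi haA)).mp hu)
          exact ⟨haA, by tauto⟩
        · rintro ⟨haA, haP⟩
          have haU : a ∉ U := fun hu => hiS ((hkey i hi a (hA i hi haA)).mp hu)
          exact ⟨haA, by tauto⟩
      have h2 : A i ∩ P' = A i ∩ P := by
        ext a
        simp only [Finset.mem_inter, hmem]
        constructor
        · rintro ⟨haA, h⟩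
          have haU : a ∉ U := fun hu => hiS ((hkey i hi a (hA i hi haA)).mp hu)
          exact ⟨haA, by tauto⟩
        · rintro ⟨haA, haP⟩
          have haU : a ∉ U := fun hu => hiS ((hkey i hi a (hA i hi haA)).mp hu)
          exact ⟨haA, by tauto⟩
      rw [h1, h2]
      have hcond : ¬ (P ∩ A i).card < ((((P \ O i) ∪ (O i \ P))) ∩ A i).card := by
        intro h
        exact hiS (Finset.mem_filter.mpr ⟨hi, h⟩)
      rw [heq i hi] at hcond
      push_neg at hcond
      calc (A i \ P).card ≤ (P ∩ A i).card := hcond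
        _ = (A i ∩ P).card := by rw [Finset.inter_comm]
  · have hUsub : U ⊆ I.biUnion O := by
      intro a ha
      rw [hUdef, Finset.mem_biUnion] at ha
      obtain ⟨j, hj, haj⟩ := ha
      exact Finset.mem_biUnion.mpr ⟨j, (Finset.mem_filter.mp hj).1, haj⟩
    ext a
    simp only [Finset.mem_sdiff, hmem]
    constructor
    · rintro ⟨h, hnb⟩
      have : a ∉ U := fun hu => hnb (hUsub hu)
      exact ⟨by tauto, hnb⟩
    · rintro ⟨haP, hnb⟩
      have : a ∉ U := fun hu => hnb (hUsub hu)
      exact ⟨Or.inl ⟨haP, this⟩, hnb⟩
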